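/- arXiv:2407.19907 — 2 statements merged into one kernel-verified Lean document; each statement's English description precedes it below -/
import Mathlib

section
/- Let α : ℝ → ℝ be a locally Lipschitz function with α(0) = 0 and α nondecreasing (in particular any locally Lipschitz extended class-K∞ function). Let t₀ ∈ ℝ and let y : ℝ → ℝ be differentiable on [t₀, ∞) with y(t₀) ≥ 0 and y'(t) ≥ −α(y(t)) for all t ≥ t₀. Then y(t) ≥ 0 for all t ≥ t₀. -/
/-- Scalar core of the CBF forward-invariance theorem: if `y` is differentiable on
`[t₀, ∞)`, `y t₀ ≥ 0` and `y' t ≥ -α (y t)` for all `t ≥ t₀`, where `α` is locally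
Lipschitz, nondecreasing and `α 0 = 0`, then `y t ≥ 0` for all `t ≥ t₀`. -/
theorem cbf_scalar_forward_invariance
    (α : ℝ → ℝ) (hlip : LocallyLipschitz α) (hα0 : α 0 = 0) (hmono : Monotone α)
    (t₀ : ℝ) (y : ℝ → ℝ)
    (hdiff : ∀ t ∈ Set.Ici t₀, DifferentiableAt ℝ y t)
    (hy₀ : 0 ≤ y t₀)
    (hineq : ∀ t ∈ Set.Ici t₀, -α (y t) ≤ deriv y t) :
    ∀ t ∈ Set.Ici t₀, 0 ≤ y t := by
  intro t₁ ht₁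
  by_contra hneg
  push_neg at hneg
  have hcont : ContinuousOn y (Set.Icc t₀ t₁) := fun t ht =>
    (hdiff t ht.1).continuousAt.continuousWithinAt
  set S : Set ℝ := Set.Icc t₀ t₁ ∩ y ⁻¹' Set.Ici 0 with hSdef
  have hSne : S.Nonempty := ⟨t₀, ⟨le_refl _, ht₁⟩, hy₀⟩
  have hSbdd : BddAbove S := ⟨t₁, fun t ht => ht.1.2⟩
  have hSclosed : IsClosed S :=
    hcont.preimage_isClosed_of_isClosed isClosed_Icc isClosed_Ici
  have hsmem : sSup S ∈ S := hSclosed.csSup_mem hSne hSbdd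
  set s := sSup S with hs
  obtain ⟨⟨hts, hst₁⟩, hys⟩ := hsmem
  have hys : (0:ℝ) ≤ y s := hys
  -- on (s, t₁], y is negative
  have hynegs : ∀ t ∈ Set.Ioo s t₁, y t < 0 := by
    intro t ht
    by_contra h
    push_neg at h
    have : t ∈ S := ⟨⟨le_trans hts ht.1.le, ht.2.le⟩, h⟩
    exact absurd (le_csSup hSbdd this) (not_le.mpr ht.1)
  -- y is monotone on [s, t₁]
  have hmonoy : MonotoneOn y (Set.Icc s t₁) := by
    apply monotoneOn_of_deriv_nonneg (convex_Icc s t₁)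
    · exact hcont.mono (Set.Icc_subset_Icc_left hts)
    · intro t ht
      rw [interior_Icc] at ht
      exact ((hdiff t (le_trans hts ht.1.le)).differentiableWithinAt)
    · intro t ht
      rw [interior_Icc] at ht
      have h1 : α (y t) ≤ 0 := hα0 ▸ hmono (hynegs t ht).le
      have h2 : (0:ℝ) ≤ -α (y t) := by linarith
      exact le_trans h2 (hineq t (le_trans hts ht.1.le))
  have : y s ≤ y t₁ :=
    hmonoy ⟨le_refl _, hst₁⟩ ⟨hst₁, le_refl _⟩ hst₁
  linarith
end

section
/- Let α : ℝ → ℝ be locally Lipschitz, nondecreasing, with α(0) = 0. Let t₀ ≤ t₁ ≤ … ≤ t_e be real numbers (e ∈ ℕ), and set t_{e+1} = +∞. Let φ₀, φ₁, …, φ_e : ℝ → ℝ be differentiable functions, and let k : [t₀, ∞) → {0, …, e} be an 'active-certificate' index defined recursively by: k(t) = k_i for t ∈ [t_i, t_{i+1}), where k₀ ∈ {0,…,e} satisfies φ_{k₀}(t₀) ≥ 0, and for i ≥ 1, k_i = i if φ_i(t_i) ≥ 0 and k_i = k_{i−1} otherwise. Assume that for each i and all t ∈ [t_i, t_{i+1}),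 the active function satisfies φ_{k_i}'(t) ≥ −α(φ_{k_i}(t)). Then φ_{k(t)}(t) ≥ 0 for all t ≥ t₀; i.e., the state never leaves the switching safe set. -/
lemma barrier_nonneg_aux (α : ℝ → ℝ) (hmono : Monotone α) (hα0 : α 0 = 0)
    (φ : ℝ → ℝ) (hφ : Differentiable ℝ φ) (a b : ℝ) (hab : a ≤ b)
    (h0 : 0 ≤ φ a) (hc : ∀ s ∈ Set.Ico a b, -α (φ s) ≤ deriv φ s) : 0 ≤ φ b := by
  by_contra hb
  push_neg at hb
  set S := Set.Icc a b ∩ φ ⁻¹' Set.Ici 0 with hS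
  have hSne : S.Nonempty := ⟨a, ⟨le_refl a, hab⟩, h0⟩
  have hScl : IsClosed S := isClosed_Icc.inter (isClosed_Ici.preimage hφ.continuous)
  have hSbdd : BddAbove S := ⟨b, fun x hx => hx.1.2⟩
  have hs0 := hScl.csSup_mem hSne hSbdd
  set s0 := sSup S with hs0def
  have hs0b : s0 ≤ b := hs0.1.2
  have hs0a : a ≤ s0 := hs0.1.1
  have hφs0 : 0 ≤ φ s0 := hs0.2
  have hs0lt : s0 < b := lt_of_le_of_ne hs0b (fun h => by rw [h] at hφs0; linarith)
  have hmonoOn : MonotoneOn φ (Set.Icc s0 b) := by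
    apply monotoneOn_of_deriv_nonneg (convex_Icc _ _) hφ.continuous.continuousOn
      (fun s _ => (hφ s).differentiableWithinAt)
    intro s hs
    rw [interior_Icc] at hs
    have hsneg : φ s < 0 := by
      by_contra h
      push_neg at h
      have : s ∈ S := ⟨⟨hs0a.trans hs.1.le, hs.2.le⟩, h⟩
      exact absurd (le_csSup hSbdd this) (not_le.mpr hs.1)
    have h1 : α (φ s) ≤ 0 := hα0 ▸ hmono hsneg.le
    have h2 := hc s ⟨hs0a.trans hs.1.le, hs.2⟩
    linarith
  have := hmonoOn ⟨le_refl s0, hs0b⟩ ⟨hs0b, le_refl b⟩ hs0b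
  linarith

/-- Forward invariance of the switching safe set (Theorem 1 of the paper).
`φ i t` is the value of the barrier certificate `i` along the trajectory at time `t`,
`k i` is the index of the certificate active on `[t i, t (i+1))` (with `t (e+1) = ∞`):
it is updated to the new certificate at a switching time only if the new certificate is
nonnegative there, and otherwise kept.  If the active certificate satisfies the barrier
condition `φ' ≥ -α (φ)` on its interval, then the active certificate value stays
nonnegative for all times, i.e. the state never leaves the switching safe set. -/
theorem switching_safe_set_invariance
    (α : ℝ → ℝ) (hlip : LocallyLipschitz α) (hmono : Monotone α) (hα0 : α 0 = 0)
    (e : ℕ) (t : ℕ → ℝ) (ht : ∀ i, i < e → t i ≤ t (i + 1))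
    (φ : ℕ → ℝ → ℝ) (hdiff : ∀ i, i ≤ e → Differentiable ℝ (φ i))
    (k : ℕ → ℕ)
    (hk0le : k 0 ≤ e) (hk0 : 0 ≤ φ (k 0) (t 0))
    (hkle : ∀ i, i ≤ e → k i ≤ e)
    (hkrec : ∀ i, 1 ≤ i → i ≤ e →
      (0 ≤ φ i (t i) → k i = i) ∧ (φ i (t i) < 0 → k i = k (i - 1)))
    (hctrl : ∀ i, i ≤ e → ∀ s, t i ≤ s → (i < e → s < t (i + 1)) →
      -α (φ (k i) s) ≤ deriv (φ (k i)) s) :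
    ∀ i, i ≤ e → ∀ s, t i ≤ s → (i < e → s < t (i + 1)) → 0 ≤ φ (k i) s := by
  -- First establish nonnegativity at each switching time.
  have key : ∀ i, i ≤ e → 0 ≤ φ (k i) (t i) := by
    intro i
    induction i with
    | zero => intro _; exact hk0
    | succ n ihn =>
      intro hne
      have hn : n ≤ e := Nat.le_of_succ_le hne
      have hnlt : n < e := hne
      by_cases hpos : 0 ≤ φ (n + 1) (t (n + 1))
      · rw [(hkrec (n + 1) (Nat.le_add_left 1 n) hne).1 hpos]
        exact hpos
      · push_neg at hpos
        have hkeq : k (n + 1) = k n := by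
          simpa using (hkrec (n + 1) (Nat.le_add_left 1 n) hne).2 hpos
        rw [hkeq]
        exact barrier_nonneg_aux α hmono hα0 (φ (k n))
          (hdiff (k n) (hkle n hn)) (t n) (t (n + 1)) (ht n hnlt) (ihn hn)
          (fun s hs => hctrl n hn s hs.1 (fun _ => hs.2))
  intro i hie s hts hslt
  exact barrier_nonneg_aux α hmono hα0 (φ (k i)) (hdiff (k i) (hkle i hie))
    (t i) s hts (key i hie)
    (fun s' hs' => hctrl i hie s' hs'.1 (fun h => hs'.2.trans (hslt h)))
end
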